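/- Let H_n = ∑_{j=1}^{n} 1/j and let h(n) be the number of indices i ∈ {1, …, n} with 1/i > H_n/n. Then the head fraction h(n)/n tends to 0 as n → ∞. -/

import Mathlib

/-!
An index `i` lies in the head exactly when `i < n / H_n`, so at most `n / H_n` of the `n` values
do, and the head fraction is at most `1 / H_n`, which tends to `0` because the harmonic series
diverges.
-/

open Finset Filter

lemma card_filter_lt_one_div_le (s : Finset ℕ) {c : ℝ} (hc : 0 < c) :
    ((s.filter fun i : ℕ => c < 1 / (i : ℝ)).card : ℝ) ≤ 1 / c := by
  have hsub : (s.filter fun i : ℕ => c < 1 / (i : ℝ)) ⊆ Icc 1 ⌊1 / c⌋₊ := by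
    intro i hi
    have hlt : c < 1 / (i : ℝ) := (mem_filter.mp hi).2
    have hi_pos : (0 : ℝ) < i := one_div_pos.mp (hc.trans hlt)
    have hi_le : (i : ℝ) ≤ 1 / c := ((lt_one_div hc hi_pos).mp hlt).le
    exact mem_Icc.mpr ⟨Nat.cast_pos.mp hi_pos, Nat.le_floor hi_le⟩
  calc ((s.filter fun i : ℕ => c < 1 / (i : ℝ)).card : ℝ)
      ≤ ⌊1 / c⌋₊ := by exact_mod_cast (card_le_card hsub).trans (Nat.card_Icc 1 _).le
    _ ≤ 1 / c := Nat.floor_le (by positivity)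

lemma sum_Icc_one_div_eq_sum_range (n : ℕ) :
    ∑ j ∈ Icc 1 n, 1 / (j : ℝ) = ∑ i ∈ range n, 1 / ((i : ℝ) + 1) := by
  rw [← Ico_add_one_right_eq_Icc, sum_Ico_eq_sum_range]
  simp [add_comm]

lemma tendsto_sum_Icc_one_div_atTop :
    Tendsto (fun n : ℕ => ∑ j ∈ Icc 1 n, 1 / (j : ℝ)) atTop atTop := by
  simpa only [sum_Icc_one_div_eq_sum_range] using Real.tendsto_sum_range_one_div_nat_succ_atTop

lemma one_le_sum_Icc_one_div {n : ℕ} (hn : 1 ≤ n) : 1 ≤ ∑ j ∈ Icc 1 n, 1 / (j : ℝ) := by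
  simpa using single_le_sum (f := fun j : ℕ => 1 / (j : ℝ)) (fun _ _ => by positivity)
    (mem_Icc.mpr ⟨le_rfl, hn⟩)

open Finset in
/-- The fraction of the Zipf data `1, 1/2, …, 1/n` lying strictly above the mean
(the head fraction of the first head/tail break) tends to 0 as `n → ∞`. -/
theorem zipf_head_fraction_tendsto_zero
    (h : ℕ → ℕ)
    (hh : ∀ n, h n = ((Finset.Icc 1 n).filter
      (fun i : ℕ => (1 / (i : ℝ)) > (∑ j ∈ Finset.Icc 1 n, (1 / (j : ℝ))) / n)).card) :
    Filter.Tendsto (fun n : ℕ => (h n : ℝ) / n) Filter.atTop (nhds 0) := by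
  refine tendsto_of_tendsto_of_tendsto_of_le_of_le' tendsto_const_nhds
    tendsto_sum_Icc_one_div_atTop.inv_tendsto_atTop (Eventually.of_forall fun n => by positivity) ?_
  filter_upwards [eventually_ge_atTop 1] with n hn
  set H := ∑ j ∈ Icc 1 n, 1 / (j : ℝ)
  have hn_pos : (0 : ℝ) < n := by exact_mod_cast hn
  have hH_pos : 0 < H := one_pos.trans_le (one_le_sum_Icc_one_div hn)
  have hhead : (h n : ℝ) ≤ n / H := by
    simpa only [hh n, gt_iff_lt, one_div_div] using
      card_filter_lt_one_div_le (Icc 1 n) (div_pos hH_pos hn_pos)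
  calc (h n : ℝ) / n ≤ n / H / n := div_le_div_of_nonneg_right hhead hn_pos.le
    _ = H⁻¹ := by field_simp
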